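/- arXiv:1901.01572 — 4 statements merged into one kernel-verified Lean document; each statement's English description precedes it below -/
import Mathlib

section
/- Let t ∈ ℝ with |t| ≤ 1/√3. Then for all integers u, v with u ≡ v (mod 2), the quantity g(u,v) = u² + 3v² + 2u + 2tv√3 is nonnegative. -/
theorem g_nonneg_case_j1 (t : ℝ) (ht : |t| ≤ 1 / Real.sqrt 3) (u v : ℤ)
    (hpar : u % 2 = v % 2) :
    (u : ℝ) ^ 2 + 3 * (v : ℝ) ^ 2 + 2 * (u : ℝ) + 2 * t * (v : ℝ) * Real.sqrt 3 ≥ 0 := by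
  have h3 : (0:ℝ) < Real.sqrt 3 := Real.sqrt_pos.mpr (by norm_num)
  have hts : |t| * Real.sqrt 3 ≤ 1 := by
    have := mul_le_mul_of_nonneg_right ht h3.le
    rwa [one_div, inv_mul_cancel₀ (ne_of_gt h3)] at this
  have habs : |2 * t * (v:ℝ) * Real.sqrt 3| ≤ 2 * |(v:ℝ)| := by
    rw [abs_mul, abs_mul, abs_mul, abs_two, abs_of_nonneg h3.le]
    calc 2 * |t| * |(v:ℝ)| * Real.sqrt 3
        = 2 * |(v:ℝ)| * (|t| * Real.sqrt 3) := by ring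
      _ ≤ 2 * |(v:ℝ)| * 1 := by
          apply mul_le_mul_of_nonneg_left hts (by positivity)
      _ = 2 * |(v:ℝ)| := by ring
  have hkey : 2 * t * (v:ℝ) * Real.sqrt 3 ≥ -(2 * |(v:ℝ)|) :=
    (neg_abs_le _).trans' (neg_le_neg habs)
  rcases eq_or_ne v 0 with hv | hv
  · subst hv
    have hu2 : u % 2 = 0 := by simpa using hpar
    obtain ⟨k, hk⟩ : ∃ k, u = 2 * k := ⟨u / 2, by omega⟩
    have hk2 : (0:ℤ) ≤ k * (k + 1) := by
      rcases le_or_gt 0 k with h | h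
      · positivity
      · have : k + 1 ≤ 0 := by omega
        nlinarith
    have hk2' : (0:ℝ) ≤ (k:ℝ) * ((k:ℝ) + 1) := by exact_mod_cast hk2
    have : (u:ℝ) = 2 * (k:ℝ) := by exact_mod_cast hk
    rw [this]
    push_cast
    nlinarith
  · have hv1 : (1:ℝ) ≤ |(v:ℝ)| := by
      have : (1:ℤ) ≤ |v| := by rcases abs_cases v with ⟨h,_⟩|⟨h,_⟩ <;> omega
      calc (1:ℝ) ≤ (|v| : ℤ) := by exact_mod_cast this
        _ = |(v:ℝ)| := by push_cast; rfl
    nlinarith [sq_nonneg ((u:ℝ) + 1), sq_abs ((v:ℝ)), sq_nonneg (|(v:ℝ)| - 1), hkey, hv1]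
end

section
/- Let t ∈ ℝ with |t| ≤ 1/√3. Then for all integers u, v with u ≡ v (mod 2), g(u,v) = u² + 3v² + u + 3v - (u - v)·t·√3 ≥ 0. -/
lemma aux_int_abs (u v : ℤ) (hpar : u % 2 = v % 2) :
    |u - v| ≤ u ^ 2 + 3 * v ^ 2 + u + 3 * v := by
  obtain ⟨k, hk⟩ : ∃ k, u = v + 2 * k := ⟨(u - v) / 2, by omega⟩
  subst hk
  have hv : 0 ≤ v * (v + 1) := by
    rcases le_or_gt 0 v with h | h
    · positivity
    · nlinarith
  rw [show v + 2 * k - v = 2 * k by ring]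
  rcases lt_trichotomy k 0 with hk0 | hk0 | hk0
  · rw [abs_of_neg (by omega)]
    nlinarith [sq_nonneg (2 * v + k + 1)]
  · subst hk0; simp; nlinarith
  · rw [abs_of_pos (by omega)]
    nlinarith [sq_nonneg (2 * v + k + 1)]

theorem g_nonneg_case_j1sq (t : ℝ) (ht : |t| ≤ 1 / Real.sqrt 3) (u v : ℤ)
    (hpar : u % 2 = v % 2) :
    (u : ℝ) ^ 2 + 3 * (v : ℝ) ^ 2 + (u : ℝ) + 3 * (v : ℝ) -
      ((u : ℝ) - (v : ℝ)) * t * Real.sqrt 3 ≥ 0 := by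
  have h3 : (0:ℝ) < Real.sqrt 3 := Real.sqrt_pos.mpr (by norm_num)
  have hts : |t * Real.sqrt 3| ≤ 1 := by
    rw [abs_mul, abs_of_pos h3]
    calc |t| * Real.sqrt 3 ≤ (1 / Real.sqrt 3) * Real.sqrt 3 :=
          mul_le_mul_of_nonneg_right ht h3.le
      _ = 1 := by field_simp
  have h1 : ((u:ℝ) - v) * t * Real.sqrt 3 ≤ |(u:ℝ) - v| := by
    calc ((u:ℝ) - v) * t * Real.sqrt 3 ≤ |((u:ℝ) - v) * t * Real.sqrt 3| := le_abs_self _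
      _ = |(u:ℝ) - v| * |t * Real.sqrt 3| := by rw [mul_assoc, abs_mul]
      _ ≤ |(u:ℝ) - v| * 1 := mul_le_mul_of_nonneg_left hts (abs_nonneg _)
      _ = |(u:ℝ) - v| := mul_one _
  have h2 : |(u:ℝ) - v| ≤ (u:ℝ) ^ 2 + 3 * v ^ 2 + u + 3 * v := by
    have := aux_int_abs u v hpar
    exact_mod_cast this
  linarith
end

section
/- Let t ∈ ℝ with |t| ≤ 1/√3. Then for all integers u, v with u ≡ v (mod 2), g(u,v) = u² + 3v² + 3(u - v) + 2 - (u - v + 2)·t·√3 ≥ 0. -/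
lemma key1 (v k : ℤ) : 0 ≤ v^2 + k*v + k^2 + k := by
  rcases eq_or_ne k (-1) with rfl | hk
  · rcases le_or_gt v 0 with h | h <;> nlinarith
  · have h : k ≤ -2 ∨ 0 ≤ k := by omega
    have h2 : 0 ≤ 3*k^2 + 4*k := by rcases h with h|h <;> nlinarith
    nlinarith [sq_nonneg (2*v+k)]

lemma key2 (v k : ℤ) : 0 ≤ v^2 + k*v + (k+1)^2 := by
  rcases eq_or_ne k (-1) with rfl | hk
  · rcases le_or_gt v 0 with h | h <;> nlinarith
  · have h : k ≤ -2 ∨ 0 ≤ k := by omega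
    have h2 : 0 ≤ 3*k^2 + 8*k + 4 := by rcases h with h|h <;> nlinarith
    nlinarith [sq_nonneg (2*v+k)]

theorem g_nonneg_case_j1j2 (t : ℝ) (ht : |t| ≤ 1 / Real.sqrt 3) (u v : ℤ)
    (hpar : u % 2 = v % 2) :
    (u : ℝ) ^ 2 + 3 * (v : ℝ) ^ 2 + 3 * ((u : ℝ) - (v : ℝ)) + 2 -
      ((u : ℝ) - (v : ℝ) + 2) * t * Real.sqrt 3 ≥ 0 := by
  obtain ⟨k, hk⟩ : ∃ k : ℤ, u = v + 2*k := ⟨(u - v)/2, by omega⟩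
  have hs3 : (0:ℝ) < Real.sqrt 3 := Real.sqrt_pos.mpr (by norm_num)
  have hs : |t * Real.sqrt 3| ≤ 1 := by
    rw [abs_mul, abs_of_pos hs3]
    calc |t| * Real.sqrt 3 ≤ (1 / Real.sqrt 3) * Real.sqrt 3 :=
          mul_le_mul_of_nonneg_right ht hs3.le
      _ = 1 := by field_simp
  set A : ℝ := (u : ℝ) ^ 2 + 3 * (v : ℝ) ^ 2 + 3 * ((u : ℝ) - (v : ℝ)) + 2 with hA
  set B : ℝ := (u : ℝ) - (v : ℝ) + 2 with hB
  have hAmB : 0 ≤ A - B := by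
    have := key1 v k
    have h2 : A - B = 4 * ((v:ℝ)^2 + k*v + k^2 + k) := by
      rw [hA, hB, hk]; push_cast; ring
    rw [h2]
    have : (0:ℝ) ≤ (v:ℝ)^2 + k*v + k^2 + k := by exact_mod_cast this
    linarith
  have hApB : 0 ≤ A + B := by
    have := key2 v k
    have h2 : A + B = 4 * ((v:ℝ)^2 + k*v + ((k:ℝ)+1)^2) := by
      rw [hA, hB, hk]; push_cast; ring
    rw [h2]
    have : (0:ℝ) ≤ (v:ℝ)^2 + k*v + ((k:ℝ)+1)^2 := by exact_mod_cast this
    linarith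
  have hBA : |B| ≤ A := abs_le.mpr ⟨by linarith, by linarith⟩
  have hBs : B * (t * Real.sqrt 3) ≤ A := by
    calc B * (t * Real.sqrt 3) ≤ |B * (t * Real.sqrt 3)| := le_abs_self _
      _ = |B| * |t * Real.sqrt 3| := abs_mul _ _
      _ ≤ |B| * 1 := mul_le_mul_of_nonneg_left hs (abs_nonneg _)
      _ = |B| := mul_one _
      _ ≤ A := hBA
  have : B * t * Real.sqrt 3 = B * (t * Real.sqrt 3) := by ring
  linarith [hBs, this ▸ hBs]
end

section
/- Let t ∈ ℝ with |t| ≤ 1/√3. Then for all integers u, v with u ≡ v (mod 2), g(u,v) = u² + 3v² - 3(u - v) + 2 - (u - v - 2)·t·√3 ≥ 0. -/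
lemma aux_consec (v : ℤ) : 0 ≤ v * (v + 1) := by
  rcases le_or_gt 0 v with h | h
  · positivity
  · have h1 : v + 1 ≤ 0 := by omega
    exact mul_nonneg_of_nonpos_of_nonpos (by omega) h1

lemma aux_h1 (v k : ℤ) : 0 ≤ (v + 2*k)^2 + 3*v^2 - 4*(v+2*k) + 4*v + 4 := by
  rcases eq_or_ne k 1 with rfl | hk
  · have := aux_consec v; nlinarith
  · have hkk : 0 ≤ (3*k - 2) * (k - 2) := by
      rcases lt_or_ge k 1 with h | h
      · exact mul_nonneg_of_nonpos_of_nonpos (by omega) (by omega)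
      · have : 2 ≤ k := by omega
        exact mul_nonneg (by omega) (by omega)
    nlinarith [sq_nonneg (2*v + k)]

lemma aux_h2 (v k : ℤ) : 0 ≤ (v + 2*k)^2 + 3*v^2 - 2*(v+2*k) + 2*v := by
  rcases eq_or_ne k 1 with rfl | hk
  · have := aux_consec v; nlinarith
  · have hkk : 0 ≤ k * (3*k - 4) := by
      rcases lt_or_ge k 1 with h | h
      · exact mul_nonneg_of_nonpos_of_nonpos (by omega) (by omega)
      · have : 2 ≤ k := by omega
        exact mul_nonneg (by omega) (by omega)
    nlinarith [sq_nonneg (2*v + k)]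

theorem g_nonneg_case_j2j1 (t : ℝ) (ht : |t| ≤ 1 / Real.sqrt 3) (u v : ℤ)
    (hpar : u % 2 = v % 2) :
    (u : ℝ) ^ 2 + 3 * (v : ℝ) ^ 2 - 3 * ((u : ℝ) - (v : ℝ)) + 2 -
      ((u : ℝ) - (v : ℝ) - 2) * t * Real.sqrt 3 ≥ 0 := by
  obtain ⟨k, rfl⟩ : ∃ k : ℤ, u = v + 2 * k := ⟨(u - v)/2, by omega⟩
  have hs3 : (0:ℝ) < Real.sqrt 3 := by positivity
  have hs : |t * Real.sqrt 3| ≤ 1 := by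
    rw [abs_mul, abs_of_pos hs3]
    calc |t| * Real.sqrt 3 ≤ (1 / Real.sqrt 3) * Real.sqrt 3 :=
          mul_le_mul_of_nonneg_right ht hs3.le
      _ = 1 := by field_simp
  rw [abs_le] at hs
  have h1 : (0:ℝ) ≤ ((v:ℝ) + 2*k)^2 + 3*v^2 - 4*((v:ℝ)+2*k) + 4*v + 4 := by
    exact_mod_cast aux_h1 v k
  have h2 : (0:ℝ) ≤ ((v:ℝ) + 2*k)^2 + 3*v^2 - 2*((v:ℝ)+2*k) + 2*v := by
    exact_mod_cast aux_h2 v k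
  push_cast
  set s := t * Real.sqrt 3 with hsdef
  nlinarith [mul_nonneg (by linarith [hs.2] : (0:ℝ) ≤ 1 - s) h1,
             mul_nonneg (by linarith [hs.1] : (0:ℝ) ≤ 1 + s) h2]
end
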